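/- arXiv:2409.00806 — 5 statements merged into one kernel-verified Lean document; each statement's English description precedes it below -/
import Mathlib

section
/- Let G be a countably infinite group (discrete, with counting measure). For each finite set F ⊆ G and each ε > 0, there exists a finite set K ⊆ G such that for any probability measure ν on G satisfying ∑_{g∈G} |ν({kg}) − ν({g})| < ε for all k ∈ K, we have ν(Fc) < 2ε for all c ∈ G. -/
open MeasureTheory

lemma exists_disjoint_translates (G : Type) [Group G] [Infinite G]
    [DecidableEq G] (F : Finset G) (n : ℕ) :
    ∃ K : Finset G, K.card = n ∧
      ∀ k ∈ K, ∀ k' ∈ K, k ≠ k' → ∀ f ∈ F, ∀ f' ∈ F, k * f ≠ k' * f' := by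
  induction n with
  | zero => exact ⟨∅, rfl, by simp⟩
  | succ m ih =>
    obtain ⟨K, hc, hd⟩ := ih
    obtain ⟨g, hg⟩ := Infinite.exists_notMem_finset
      (K ∪ K.biUnion fun k => (F ×ˢ F).image fun p => k * p.2 * p.1⁻¹)
    have hgK : g ∉ K := fun h => hg (Finset.mem_union_left _ h)
    have hgbad : ∀ k ∈ K, ∀ f ∈ F, ∀ f' ∈ F, g ≠ k * f' * f⁻¹ := by
      intro k hk f hf f' hf' he
      exact hg (Finset.mem_union_right _ (Finset.mem_biUnion.2 ⟨k, hk,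
        Finset.mem_image.2 ⟨(f, f'), Finset.mem_product.2 ⟨hf, hf'⟩, he.symm⟩⟩))
    refine ⟨insert g K, by rw [Finset.card_insert_of_notMem hgK, hc], ?_⟩
    intro k hk k' hk' hne f hf f' hf' he
    rcases Finset.mem_insert.1 hk with hkg | hk
    · rcases Finset.mem_insert.1 hk' with hkg' | hk'
      · exact hne (hkg.trans hkg'.symm)
      · rw [hkg] at he
        exact hgbad k' hk' f hf f' hf' (by rw [← he]; group)
    · rcases Finset.mem_insert.1 hk' with hkg' | hk'
      · rw [hkg'] at he
        exact hgbad k hk f' hf' f hf (by rw [he]; group)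
      · exact hd k hk k' hk' hne f hf f' hf' he

lemma measure_finset_eq_sum {G : Type} [MeasurableSpace G] [MeasurableSingletonClass G]
    (ν : Measure G) (s : Finset G) [DecidableEq G] : ν ↑s = ∑ a ∈ s, ν {a} := by
  rw [← measure_biUnion_finset (f := fun a => ({a} : Set G))]
  · congr 1; ext x; simp
  · intro a _ b _ hab
    simp [Function.onFun, Set.disjoint_singleton, hab]
  · intro b _; exact measurableSet_singleton b

/-- For each finite `F ⊆ G` and `ε > 0` there is a finite `K ⊆ G` such that every
`(K, ε)`-invariant probability measure `ν` on `G` satisfies `ν (F c) < 2ε` for all `c`. -/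
theorem folner_small_on_translates (G : Type) [Group G] [Countable G] [Infinite G]
    [MeasurableSpace G] [MeasurableSingletonClass G]
    (F : Finset G) (ε : ℝ) (hε : 0 < ε) :
    ∃ K : Finset G, ∀ ν : Measure G, IsProbabilityMeasure ν →
      (∀ k ∈ K, ∑' g : G, |(ν {k * g}).toReal - (ν {g}).toReal| < ε) →
      ∀ c : G, (ν ((fun f => f * c) '' (F : Set G))).toReal < 2 * ε := by
  classical
  obtain ⟨n, hn⟩ : ∃ n : ℕ, 1 < n * ε := by
    obtain ⟨n, hn⟩ := exists_nat_gt (1 / ε)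
    exact ⟨n, by rw [div_lt_iff₀ hε] at hn; linarith⟩
  obtain ⟨K, hKcard, hKdisj⟩ := exists_disjoint_translates G F n
  refine ⟨K, fun ν hν hinv c => ?_⟩
  by_contra hcon
  push_neg at hcon
  -- Setup
  set Fc : Finset G := F.image (fun f => f * c) with hFc
  have hA : (fun f => f * c) '' (F : Set G) = (Fc : Set G) := by
    rw [hFc, Finset.coe_image]
  rw [hA] at hcon
  -- singleton measures finite
  have hsing : ∀ g : G, ν {g} ≠ ⊤ := fun g => (measure_lt_top ν _).ne
  -- summability
  have hsum : Summable (fun g : G => (ν {g}).toReal) := by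
    apply ENNReal.summable_toReal
    have h0 : ν (⋃ g : G, {g}) = ∑' g : G, ν {g} :=
      measure_iUnion (fun a b hab => by simp [Function.onFun, Set.disjoint_singleton, hab])
        (fun b => measurableSet_singleton b)
    rw [← h0, Set.iUnion_of_singleton, measure_univ]; exact ENNReal.one_ne_top
  -- toReal of finset measure
  have hm : ∀ s : Finset G, (ν ↑s).toReal = ∑ a ∈ s, (ν {a}).toReal := by
    intro s
    rw [measure_finset_eq_sum, ENNReal.toReal_sum (fun a _ => hsing a)]
  -- key: for each k ∈ K, ε < ν(k • Fc)
  have key : ∀ k ∈ K, ε < (ν ↑(Fc.image (fun a => k * a))).toReal := by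
    intro k hk
    have hsumk : Summable (fun g : G => (ν {k * g}).toReal) :=
      hsum.comp_injective (mul_right_injective k)
    have hsumd : Summable (fun g : G => |(ν {k * g}).toReal - (ν {g}).toReal|) := by
      apply Summable.abs
      exact hsumk.sub hsum
    have hbound : ∑ a ∈ Fc, |(ν {k * a}).toReal - (ν {a}).toReal| < ε :=
      lt_of_le_of_lt (Summable.sum_le_tsum Fc (fun a _ => abs_nonneg _) hsumd) (hinv k hk)
    have himg : (ν ↑(Fc.image (fun a => k * a))).toReal = ∑ a ∈ Fc, (ν {k * a}).toReal := by
      rw [hm, Finset.sum_image (fun a _ b _ h => mul_left_cancel h)]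
    have hdiff : |(ν ↑(Fc.image (fun a => k * a))).toReal - (ν ↑Fc).toReal| < ε := by
      rw [himg, hm, ← Finset.sum_sub_distrib]
      exact lt_of_le_of_lt (Finset.abs_sum_le_sum_abs _ _) hbound
    have := abs_lt.1 hdiff
    linarith [hcon]
  -- disjointness of translated sets
  have hdisj : (K : Set G).PairwiseDisjoint (fun k => ((Fc.image (fun a => k * a)) : Set G)) := by
    intro k hk k' hk' hne
    rw [Function.onFun, Set.disjoint_left]
    intro x hx hx'
    simp only [Finset.coe_image, Set.mem_image, Finset.mem_coe, hFc, Finset.mem_image] at hx hx'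
    obtain ⟨a, ⟨f, hf, rfl⟩, rfl⟩ := hx
    obtain ⟨a', ⟨f', hf', rfl⟩, he⟩ := hx'
    have he2 : (k' * f') * c = (k * f) * c := by rw [mul_assoc, mul_assoc]; exact he
    exact hKdisj k' hk' k hk (Ne.symm hne) f' hf' f hf (mul_right_cancel he2)
  -- sum of measures ≤ 1
  have hle : ∑ k ∈ K, (ν ↑(Fc.image (fun a => k * a))).toReal ≤ 1 := by
    have h1 : ∑ k ∈ K, ν ↑(Fc.image (fun a => k * a)) =
        ν (⋃ k ∈ K, ↑(Fc.image (fun a => k * a))) :=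
      (measure_biUnion_finset hdisj (fun b _ => (Fc.image (fun a => b * a)).measurableSet)).symm
    have h2 : ν (⋃ k ∈ K, ↑(Fc.image (fun a => k * a))) ≤ 1 := by
      rw [← measure_univ (μ := ν)]
      exact measure_mono (Set.subset_univ _)
    calc ∑ k ∈ K, (ν ↑(Fc.image (fun a => k * a))).toReal
        = (∑ k ∈ K, ν ↑(Fc.image (fun a => k * a))).toReal :=
          (ENNReal.toReal_sum (fun a _ => (measure_lt_top ν _).ne)).symm
      _ ≤ (1 : ENNReal).toReal := by
          apply ENNReal.toReal_mono ENNReal.one_ne_top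
          rw [h1]; exact h2
      _ = 1 := by simp
  have : (n : ℝ) * ε < 1 := by
    calc (n : ℝ) * ε = ∑ _k ∈ K, ε := by rw [Finset.sum_const, hKcard, nsmul_eq_mul]
      _ < ∑ k ∈ K, (ν ↑(Fc.image (fun a => k * a))).toReal := ?_
      _ ≤ 1 := hle
    apply Finset.sum_lt_sum_of_nonempty
    · rw [← Finset.card_pos, hKcard]
      by_contra hn0
      push_neg at hn0
      interval_cases n
      simp at hn; linarith
    · exact key
  linarith
end

section
/- Let G be a countably infinite abelian group with Pontryagin dual Ĝ, and let ν be a probability measure on Ĝ. Then there exists a measure-preserving system (X, μ, (T_g)_{g∈G}) and a measurable function f : X → S¹ ∪ {1} of modulus 1 such that for all h ∈ G, the Fourier coefficient ν̂(h) = ∫_Ĝ χ(h) dν(χ) equals ⟨f ∘ T_h, f⟩_{L²(X,μ)}, and ν({trivial character}) = ∫_X f dμ. -/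
/-!
Take `X = Ĝ × S¹` with `μ = ν × Haar` and let `g` rotate the fibre over `χ` by `χ g`. For the
fibre coordinate `z`, the correlation `z(T_h p) · conj (z p)` is `χ h` pointwise, so its integral
is `ν̂ h`. Setting the coordinate to `1` over the trivial character keeps this pointwise
identity (there `χ h = 1`), and since `z` has Haar mean `0` on every other fibre, the mean of
the modified function becomes `ν {1}`.
-/

open MeasureTheory

noncomputable section

namespace Circle

instance : MeasurableSpace Circle := Subtype.instMeasurableSpace

instance : BorelSpace Circle := Subtype.borelSpace _

def haar : Measure Circle := Measure.haarMeasure ⊤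

instance : haar.IsMulLeftInvariant := Measure.isMulLeftInvariant_haarMeasure ⊤

instance : IsProbabilityMeasure haar :=
  ⟨by rw [← TopologicalSpace.PositiveCompacts.coe_top]; exact Measure.haarMeasure_self⟩

theorem integral_coe_eq_zero (μ : Measure Circle) [μ.IsMulLeftInvariant] :
    ∫ z, (z : ℂ) ∂μ = 0 :=
  integral_eq_zero_of_mul_left_eq_neg (g := exp Real.pi) fun z => by
    rw [coe_mul, coe_exp, Complex.exp_pi_mul_I, neg_one_mul]

end Circle

namespace PontryaginDual

variable {G : Type} [CommGroup G] [TopologicalSpace G]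

theorem continuous_eval (g : G) : Continuous fun χ : PontryaginDual G => χ g :=
  continuous_eval_const (F := ContinuousMonoidHom G Circle) g

def skewRotation (g : G) (p : PontryaginDual G × Circle) : PontryaginDual G × Circle :=
  (p.1, p.1 g * p.2)

theorem skewRotation_mul (g h : G) (p : PontryaginDual G × Circle) :
    skewRotation (g * h) p = skewRotation g (skewRotation h p) := by
  simp only [skewRotation, _root_.map_mul, mul_assoc]

theorem skewRotation_one (p : PontryaginDual G × Circle) : skewRotation 1 p = p := by
  simp only [skewRotation, _root_.map_one, one_mul]

open Classical in
def twistedCoord (p : PontryaginDual G × Circle) : ℂ :=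
  if p.1 = 1 then 1 else p.2

theorem norm_twistedCoord (p : PontryaginDual G × Circle) : ‖twistedCoord p‖ = 1 := by
  unfold twistedCoord
  split_ifs
  exacts [norm_one, Circle.norm_coe p.2]

theorem twistedCoord_skewRotation_mul_conj (h : G) (p : PontryaginDual G × Circle) :
    twistedCoord (skewRotation h p) * starRingEnd ℂ (twistedCoord p) = p.1 h := by
  rcases p with ⟨χ, z⟩
  by_cases hχ : χ = 1
  · subst hχ
    simp [twistedCoord, skewRotation]
  · simp only [twistedCoord, skewRotation, hχ, if_false, ← Circle.coe_inv_eq_conj,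
      ← Circle.coe_mul, mul_inv_cancel_right]

variable [MeasurableSpace (PontryaginDual G)]

theorem integral_twistedCoord_skewRotation_mul_conj (ν : Measure (PontryaginDual G))
    (μ : Measure Circle) [SFinite ν] [IsProbabilityMeasure μ] (h : G) :
    ∫ p, twistedCoord (skewRotation h p) * starRingEnd ℂ (twistedCoord p) ∂ν.prod μ =
      ∫ χ, (χ h : ℂ) ∂ν := by
  simp_rw [twistedCoord_skewRotation_mul_conj]
  rw [integral_fun_fst (fun χ : PontryaginDual G => (χ h : ℂ)), probReal_univ, one_smul]

variable [BorelSpace (PontryaginDual G)]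

theorem measurePreserving_skewRotation (ν : Measure (PontryaginDual G)) (μ : Measure Circle)
    [SFinite ν] [SFinite μ] [μ.IsMulLeftInvariant] (g : G) :
    MeasurePreserving (skewRotation g) (ν.prod μ) (ν.prod μ) :=
  (MeasurePreserving.id ν).skew_product
    (((continuous_eval g).comp continuous_fst).mul continuous_snd).measurable
    (.of_forall fun χ => map_mul_left_eq_self μ (χ g))

theorem measurable_twistedCoord : Measurable (twistedCoord (G := G)) := by
  classical
  exact Measurable.ite (measurable_fst (measurableSet_singleton 1)) measurable_const
    (measurable_subtype_coe.comp measurable_snd)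

theorem integral_twistedCoord (ν : Measure (PontryaginDual G)) [IsFiniteMeasure ν]
    (μ : Measure Circle) [IsProbabilityMeasure μ] [μ.IsMulLeftInvariant] :
    ∫ p, twistedCoord p ∂ν.prod μ = (ν.real {1} : ℂ) := by
  have fiber (χ : PontryaginDual G) :
      ∫ z, twistedCoord (χ, z) ∂μ = Set.indicator {1} (fun _ => (1 : ℂ)) χ := by
    by_cases hχ : χ = 1
    · simp [twistedCoord, hχ]
    · simp [twistedCoord, hχ, Circle.integral_coe_eq_zero]
  have integrable : Integrable twistedCoord (ν.prod μ) :=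
    (integrable_const (1 : ℝ)).mono' measurable_twistedCoord.aestronglyMeasurable
      (.of_forall fun p => (norm_twistedCoord p).le)
  rw [integral_prod _ integrable, integral_congr_ae (.of_forall fiber),
    integral_indicator_const _ (measurableSet_singleton 1), Complex.real_smul, mul_one]

end PontryaginDual

end

theorem measure_on_dual_realized_by_modulus_one_function_general
    (G : Type) [CommGroup G]
    [TopologicalSpace G]
    [MeasurableSpace (PontryaginDual G)] [BorelSpace (PontryaginDual G)]
    (ν : Measure (PontryaginDual G)) [IsProbabilityMeasure ν] :
    ∃ (X : Type) (_ : MeasurableSpace X) (μ : Measure X) (T : G → X → X) (f : X → ℂ),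
      IsProbabilityMeasure μ ∧
      (∀ g : G, MeasurePreserving (T g) μ μ) ∧
      (∀ g h : G, ∀ x : X, T (g * h) x = T g (T h x)) ∧
      (∀ x : X, T 1 x = x) ∧
      Measurable f ∧
      (∀ x : X, ‖f x‖ = 1) ∧
      (∀ h : G, (∫ χ : PontryaginDual G, (χ h : ℂ) ∂ν) =
        ∫ x, f (T h x) * (starRingEnd ℂ) (f x) ∂μ) ∧
      (((ν {1}).toReal : ℂ) = ∫ x, f x ∂μ) :=
  ⟨_, inferInstance, ν.prod Circle.haar, PontryaginDual.skewRotation,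
    PontryaginDual.twistedCoord, inferInstance,
    PontryaginDual.measurePreserving_skewRotation ν Circle.haar,
    PontryaginDual.skewRotation_mul, PontryaginDual.skewRotation_one,
    PontryaginDual.measurable_twistedCoord, PontryaginDual.norm_twistedCoord,
    fun h => (PontryaginDual.integral_twistedCoord_skewRotation_mul_conj ν Circle.haar h).symm,
    (PontryaginDual.integral_twistedCoord ν Circle.haar).symm⟩

/-- Every probability measure `ν` on the Pontryagin dual of a countably infinite abelian
group `G` arises as the correlation measure of a modulus-one function over a measure
preserving `G`-system; moreover `ν {1}` is realized as the mean of that function. -/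
theorem measure_on_dual_realized_by_modulus_one_function
    (G : Type) [CommGroup G] [Countable G] [Infinite G]
    [TopologicalSpace G] [DiscreteTopology G]
    [MeasurableSpace (PontryaginDual G)] [BorelSpace (PontryaginDual G)]
    (ν : Measure (PontryaginDual G)) [IsProbabilityMeasure ν] :
    ∃ (X : Type) (_ : MeasurableSpace X) (μ : Measure X) (T : G → X → X) (f : X → ℂ),
      IsProbabilityMeasure μ ∧
      (∀ g : G, MeasurePreserving (T g) μ μ) ∧
      (∀ g h : G, ∀ x : X, T (g * h) x = T g (T h x)) ∧
      (∀ x : X, T 1 x = x) ∧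
      Measurable f ∧
      (∀ x : X, ‖f x‖ = 1) ∧
      (∀ h : G, (∫ χ : PontryaginDual G, (χ h : ℂ) ∂ν) =
        ∫ x, f (T h x) * (starRingEnd ℂ) (f x) ∂μ) ∧
      (((ν {1}).toReal : ℂ) = ∫ x, f x ∂μ) :=
  measure_on_dual_realized_by_modulus_one_function_general G ν
end

section
/- Let G be a countably infinite group and suppose V ⊆ G is a set of operatorial recurrence. If V = V₁ ∪ V₂, then at least one of V₁, V₂ is a set of operatorial recurrence. -/
/-- `V` is a set of operatorial recurrence in `G`: for every unitary representation `π`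
of `G` on a separable Hilbert space and every vector `ξ` with `⟨π(v)ξ, ξ⟩ = 0` for all
`v ∈ V`, the vector `ξ` is orthogonal to all `π(G)`-invariant vectors. -/
def IsOpRecurrenceSet (G : Type) [Group G] (V : Set G) : Prop :=
  ∀ (H : Type) (_ : NormedAddCommGroup H) (_ : InnerProductSpace ℂ H) (_ : CompleteSpace H)
    (_ : SecondCountableTopology H),
    ∀ (π : G →* (H ≃ₗᵢ[ℂ] H)) (ξ : H),
      (∀ v ∈ V, (inner ℂ ((π v) ξ) ξ : ℂ) = 0) →
      ∀ η : H, (∀ g : G, (π g) η = η) → (inner ℂ ξ η : ℂ) = 0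

/-! If `(π₁, ξ₁, η₁)` and `(π₂, ξ₂, η₂)` witness that `V₁` and `V₂` are not sets of operatorial
recurrence, pass to the Hilbert tensor product `π₁ ⊗ π₂`, realised on the completion of the algebraic
tensor product `H₁ ⊗ H₂`. The matrix coefficient of `ξ₁ ⊗ ξ₂` at `v` is the product
`⟨π₁(v)ξ₁, ξ₁⟩⟨π₂(v)ξ₂, ξ₂⟩`, so it vanishes on `V₁ ∪ V₂`, while `η₁ ⊗ η₂` is invariant and
`⟨ξ₁ ⊗ ξ₂, η₁ ⊗ η₂⟩ = ⟨ξ₁, η₁⟩⟨ξ₂, η₂⟩ ≠ 0`. -/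

open scoped TensorProduct
open UniformSpace

namespace LinearIsometryEquiv

variable {𝕜 E F : Type*} [NormedField 𝕜] [SeminormedAddCommGroup E] [NormedSpace 𝕜 E]
  [SeminormedAddCommGroup F] [NormedSpace 𝕜 F]

theorem completion_map_symm_map (f : E ≃ₗᵢ[𝕜] F) (x : Completion E) :
    Completion.map f.symm (Completion.map f x) = x := by
  induction x using Completion.induction_on with
  | hp => exact isClosed_eq (Completion.continuous_map.comp Completion.continuous_map) continuous_id
  | ih x =>
    rw [Completion.map_coe f.isometry.uniformContinuous,
      Completion.map_coe f.symm.isometry.uniformContinuous, symm_apply_apply]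

noncomputable def completion (f : E ≃ₗᵢ[𝕜] F) : Completion E ≃ₗᵢ[𝕜] Completion F where
  toLinearMap := f.toContinuousLinearEquiv.toContinuousLinearMap.completion
  invFun := Completion.map f.symm
  left_inv := f.completion_map_symm_map
  right_inv := f.symm.completion_map_symm_map
  norm_map' x := by
    induction x using Completion.induction_on with
    | hp => exact isClosed_eq (continuous_norm.comp Completion.continuous_map) continuous_norm
    | ih x =>
      change ‖Completion.map f (x : Completion E)‖ = ‖(x : Completion E)‖
      rw [Completion.map_coe f.isometry.uniformContinuous, Completion.norm_coe,
        Completion.norm_coe, f.norm_map]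

@[simp] theorem completion_coe (f : E ≃ₗᵢ[𝕜] F) (x : E) : f.completion x = f x :=
  ContinuousLinearMap.completion_apply_coe _ x

theorem ext_completion {f g : Completion E ≃ₗᵢ[𝕜] Completion F} (h : ∀ x : E, f x = g x) :
    f = g :=
  LinearIsometryEquiv.ext fun x => by
    induction x using Completion.induction_on with
    | hp => exact isClosed_eq f.continuous g.continuous
    | ih x => exact h x

variable (𝕜 E) in
noncomputable def completionHom : (E ≃ₗᵢ[𝕜] E) →* (Completion E ≃ₗᵢ[𝕜] Completion E) where
  toFun f := f.completion
  map_one' := ext_completion fun x => by simp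
  map_mul' f g := ext_completion fun x => by simp

end LinearIsometryEquiv

section TensorRepresentation

variable {𝕜 G H₁ H₂ : Type*} [RCLike 𝕜] [Monoid G]
  [NormedAddCommGroup H₁] [InnerProductSpace 𝕜 H₁] [NormedAddCommGroup H₂] [InnerProductSpace 𝕜 H₂]

noncomputable def tensorRep (π₁ : G →* (H₁ ≃ₗᵢ[𝕜] H₁)) (π₂ : G →* (H₂ ≃ₗᵢ[𝕜] H₂)) :
    G →* (H₁ ⊗[𝕜] H₂ ≃ₗᵢ[𝕜] H₁ ⊗[𝕜] H₂) where
  toFun g := TensorProduct.congrIsometry (π₁ g) (π₂ g)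
  map_one' := LinearIsometryEquiv.ext fun x => by
    induction x using TensorProduct.induction_on with
    | zero => simp
    | tmul x y => simp only [map_one]; rfl
    | add x y hx hy => simp_all
  map_mul' g h := LinearIsometryEquiv.ext fun x => by
    induction x using TensorProduct.induction_on with
    | zero => simp
    | tmul x y => simp only [map_mul]; rfl
    | add x y hx hy => simp_all

noncomputable def hilbertTensorRep (π₁ : G →* (H₁ ≃ₗᵢ[𝕜] H₁)) (π₂ : G →* (H₂ ≃ₗᵢ[𝕜] H₂)) :
    G →* (Completion (H₁ ⊗[𝕜] H₂) ≃ₗᵢ[𝕜] Completion (H₁ ⊗[𝕜] H₂)) :=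
  (LinearIsometryEquiv.completionHom 𝕜 _).comp (tensorRep π₁ π₂)

@[simp] theorem hilbertTensorRep_apply_tmul (π₁ : G →* (H₁ ≃ₗᵢ[𝕜] H₁))
    (π₂ : G →* (H₂ ≃ₗᵢ[𝕜] H₂)) (g : G) (x : H₁) (y : H₂) :
    hilbertTensorRep π₁ π₂ g (x ⊗ₜ y : H₁ ⊗[𝕜] H₂) =
      ((π₁ g x ⊗ₜ π₂ g y : H₁ ⊗[𝕜] H₂) : Completion (H₁ ⊗[𝕜] H₂)) :=
  LinearIsometryEquiv.completion_coe _ _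

theorem UniformSpace.Completion.inner_coe_tmul (x x' : H₁) (y y' : H₂) :
    inner 𝕜 ((x ⊗ₜ y : H₁ ⊗[𝕜] H₂) : Completion (H₁ ⊗[𝕜] H₂)) (x' ⊗ₜ y' : H₁ ⊗[𝕜] H₂) =
      inner 𝕜 x x' * inner 𝕜 y y' := by
  rw [Completion.inner_coe, TensorProduct.inner_tmul]

end TensorRepresentation

instance TensorProduct.separableSpace {𝕜 E F : Type*} [RCLike 𝕜]
    [NormedAddCommGroup E] [InnerProductSpace 𝕜 E] [NormedAddCommGroup F] [InnerProductSpace 𝕜 F]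
    [TopologicalSpace.SeparableSpace E] [TopologicalSpace.SeparableSpace F] :
    TopologicalSpace.SeparableSpace (E ⊗[𝕜] F) := by
  rw [← TopologicalSpace.isSeparable_univ_iff, ← Submodule.top_coe (R := 𝕜),
    ← TensorProduct.span_tmul_eq_top]
  refine TopologicalSpace.IsSeparable.span ?_
  convert TopologicalSpace.isSeparable_range
    (TensorProduct.continuous_tmul (𝕜 := 𝕜) (E := E) (F := F))
  ext; simp

theorem not_isOpRecurrenceSet_union {G : Type} [Group G] {V₁ V₂ : Set G}
    (h₁ : ¬ IsOpRecurrenceSet G V₁) (h₂ : ¬ IsOpRecurrenceSet G V₂) :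
    ¬ IsOpRecurrenceSet G (V₁ ∪ V₂) := by
  simp only [IsOpRecurrenceSet, not_forall, exists_prop] at h₁ h₂
  obtain ⟨H₁, _, _, _, _, π₁, ξ₁, hξ₁, η₁, hη₁, hξη₁⟩ := h₁
  obtain ⟨H₂, _, _, _, _, π₂, ξ₂, hξ₂, η₂, hη₂, hξη₂⟩ := h₂
  intro h
  have key := h (Completion (H₁ ⊗[ℂ] H₂)) inferInstance inferInstance inferInstance inferInstance
    (hilbertTensorRep π₁ π₂) (ξ₁ ⊗ₜ ξ₂ : H₁ ⊗[ℂ] H₂) ?_ (η₁ ⊗ₜ η₂ : H₁ ⊗[ℂ] H₂) ?_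
  · rw [Completion.inner_coe_tmul] at key
    exact mul_ne_zero hξη₁ hξη₂ key
  · rintro v (hv | hv)
    · rw [hilbertTensorRep_apply_tmul, Completion.inner_coe_tmul, hξ₁ v hv, zero_mul]
    · rw [hilbertTensorRep_apply_tmul, Completion.inner_coe_tmul, hξ₂ v hv, mul_zero]
  · intro g
    rw [hilbertTensorRep_apply_tmul, hη₁, hη₂]

theorem opRecurrence_union_general (G : Type) [Group G]
    (V V₁ V₂ : Set G) (hV : IsOpRecurrenceSet G V) (hU : V = V₁ ∪ V₂) :
    IsOpRecurrenceSet G V₁ ∨ IsOpRecurrenceSet G V₂ := by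
  subst hU
  by_contra! h
  exact not_isOpRecurrenceSet_union h.1 h.2 hV

/-- If `V = V₁ ∪ V₂` is a set of operatorial recurrence, then so is `V₁` or `V₂`. -/
theorem opRecurrence_union (G : Type) [Group G] [Countable G] [Infinite G]
    (V V₁ V₂ : Set G) (hV : IsOpRecurrenceSet G V) (hU : V = V₁ ∪ V₂) :
    IsOpRecurrenceSet G V₁ ∨ IsOpRecurrenceSet G V₂ :=
  opRecurrence_union_general G V V₁ V₂ hV hU
end

section
/- There exists a Følner sequence (F_n) in ℤ and a sequence (u_m)_{m∈ℤ} of complex numbers such that: lim_n (1/|F_n|) ∑_{m∈F_n} |u_m|² = 1/2, lim_n (1/|F_n|) ∑_{m∈F_n} u_m = 1/2, and for every h ∈ ℤ, h ≠ 0, lim_n (1/|F_n|) ∑_{m∈F_n} u_{m+h} conj(u_m) = 0. Concretely, one may take F_n = [n³, n³ + 2n] ∩ ℤ and u defined by u_m = 1 for m ∈ [n³, n³+n], and u_m = −n for m ∈ [n³+n+1, n³+2n] (values elsewhere irrelevant as n ranges over ℕ with disjoint blocks). -/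
/-!
Away from the blocks `[k⁴, k⁴ + 8k²)` the sequence is `1/2`. Inside block `k` it is `1/2` except for
spikes `1/2 + k` at both ends, and on the `k` integers on either side of the block it is
`1/2 - 2k`. The spikes add `2k²` to `∑ |u|²` over the block, lifting the mean square from `1/4`
to `1/2`, but only `O(k)` to `∑ u`. For `0 < h ≤ k` the interior contributes `≈ 8k² · 1/4 = 2k²`
to the autocorrelation, and the single product of the right spike with the right margin,
`(1/2 + k)(1/2 - 2k) ≈ -2k²`, cancels it, leaving `(3/2 - h) k = o(8k²)`; negative `h` follow by
the symmetry of the profile about the centre of the block.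
-/

open Filter
open scoped symmDiff

namespace FolnerCounterexample

open Finset

/-- The deviation of the sequence from `1/2` at offset `x` from the start `k⁴` of block `k`. -/
noncomputable def bump (k : ℕ) (x : ℤ) : ℝ :=
  if x = 0 ∨ x = 8 * k ^ 2 - 1 then k
  else if -k ≤ x ∧ x < 0 ∨ 8 * k ^ 2 ≤ x ∧ x < 8 * k ^ 2 + k then -2 * k
  else 0

noncomputable def seq (m : ℤ) : ℝ := 1 / 2 + ∑ᶠ k : ℕ, bump k (m - k ^ 4)

noncomputable def block (k : ℕ) : Finset ℤ := Ico ((k : ℤ) ^ 4) (k ^ 4 + 8 * k ^ 2)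

lemma bump_eq_zero {k : ℕ} {x : ℤ} (hx : x < -k ∨ 8 * k ^ 2 + k ≤ x) : bump k x = 0 := by
  rcases Nat.eq_zero_or_pos k with rfl | hk
  · simp [bump]
  · have := Int.le_self_sq k
    unfold bump
    rw [if_neg (by omega), if_neg (by omega)]

lemma bump_reflect (k : ℕ) (x : ℤ) : bump k (8 * k ^ 2 - 1 - x) = bump k x := by
  unfold bump
  split_ifs <;> first | rfl | omega

lemma pow_four_sub_le_pow_four_sub {a b : ℤ} (ha : 1 ≤ a) (hab : a ≤ b) :
    a ^ 4 - a ≤ b ^ 4 - b := by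
  have : 1 ≤ b ^ 3 + b ^ 2 * a + b * a ^ 2 + a ^ 3 := by
    nlinarith [pow_pos (by omega : (0 : ℤ) < b) 3, pow_pos (by omega : (0 : ℤ) < a) 3,
      mul_pos (by omega : (0 : ℤ) < b) (by omega : (0 : ℤ) < a)]
  nlinarith [mul_le_mul_of_nonneg_left this (by omega : (0 : ℤ) ≤ b - a)]

lemma pow_four_add_le_of_lt {j k : ℕ} (hjk : j < k) :
    (j : ℤ) ^ 4 + 8 * j ^ 2 + j ≤ k ^ 4 - k := by
  have hj : (0 : ℤ) ≤ j := by positivity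
  have := pow_four_sub_le_pow_four_sub (by omega : 1 ≤ (j : ℤ) + 1) (by omega : (j : ℤ) + 1 ≤ k)
  nlinarith [mul_nonneg hj (sq_nonneg ((j : ℤ) - 1)), pow_nonneg hj 3]

lemma seq_pow_four_add {k : ℕ} {x : ℤ} (hx₁ : -k ≤ x) (hx₂ : x < 8 * k ^ 2 + k) :
    seq (k ^ 4 + x) = 1 / 2 + bump k x := by
  rw [seq, finsum_eq_single _ k fun j hj => bump_eq_zero ?_, add_sub_cancel_left]
  rcases lt_or_gt_of_ne hj with hjk | hkj
  · have := pow_four_add_le_of_lt hjk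
    omega
  · have := pow_four_add_le_of_lt hkj
    omega

lemma bump_zero (k : ℕ) : bump k 0 = k := by simp [bump]

lemma bump_last (k : ℕ) : bump k (8 * k ^ 2 - 1) = k := by simp [bump]

lemma bump_of_pos_of_lt {k : ℕ} {x : ℤ} (hx₁ : 0 < x) (hx₂ : x < 8 * k ^ 2 - 1) :
    bump k x = 0 := by
  unfold bump
  rw [if_neg (by omega), if_neg (by omega)]

lemma bump_of_le_of_lt {k : ℕ} {x : ℤ} (hx₁ : 8 * k ^ 2 ≤ x) (hx₂ : x < 8 * k ^ 2 + k) :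
    bump k x = -2 * k := by
  have := Int.le_self_sq k
  unfold bump
  rw [if_neg (by omega), if_pos (by omega)]

lemma sum_Ico_consecutive_of_le {α M : Type*} [LinearOrder α] [LocallyFiniteOrder α]
    [AddCommMonoid M] (f : α → M) {a b c : α} (hab : a ≤ b) (hbc : b ≤ c) :
    ∑ x ∈ Ico a b, f x + ∑ x ∈ Ico b c, f x = ∑ x ∈ Ico a c, f x := by
  rw [← sum_union (Ico_disjoint_Ico_consecutive a b c), Ico_union_Ico_eq_Ico hab hbc]

lemma sum_Ico_of_forall_eq {f : ℤ → ℝ} {a b : ℤ} {c : ℝ} (hab : a ≤ b)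
    (hf : ∀ x ∈ Ico a b, f x = c) : ∑ x ∈ Ico a b, f x = (b - a) * c := by
  rw [sum_congr rfl hf, sum_const, Int.card_Ico, nsmul_eq_mul, ← Int.cast_natCast,
    Int.toNat_of_nonneg (by omega), Int.cast_sub]

lemma sum_block (k : ℕ) (f : ℤ → ℝ) :
    ∑ m ∈ block k, f m = ∑ x ∈ Ico 0 (8 * (k : ℤ) ^ 2), f (k ^ 4 + x) := by
  rw [block, ← sum_image (fun _ _ _ _ => (add_right_injective _ ·)), image_add_left_Ico, add_zero]

lemma sum_comp_bump {k : ℕ} (hk : 1 ≤ k) (g : ℝ → ℝ) :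
    ∑ x ∈ Ico 0 (8 * (k : ℤ) ^ 2), g (1 / 2 + bump k x) =
      2 * g (1 / 2 + k) + (8 * k ^ 2 - 2) * g (1 / 2) := by
  have := Int.le_self_sq k
  rw [← sum_Ico_consecutive_of_le _ zero_le_one (by omega : (1 : ℤ) ≤ 8 * k ^ 2),
    ← sum_Ico_consecutive_of_le _ (by omega : (1 : ℤ) ≤ 8 * k ^ 2 - 1) (by omega),
    sum_Ico_of_forall_eq zero_le_one (c := g (1 / 2 + k)) fun x hx => by
      rw [show x = 0 by rw [mem_Ico] at hx; omega, bump_zero],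
    sum_Ico_of_forall_eq (by omega) (c := g (1 / 2)) fun x hx => by
      rw [mem_Ico] at hx
      rw [bump_of_pos_of_lt (by omega) (by omega), add_zero],
    sum_Ico_of_forall_eq (by omega) (c := g (1 / 2 + k)) fun x hx => by
      rw [show x = 8 * k ^ 2 - 1 by rw [mem_Ico] at hx; omega, bump_last]]
  push_cast
  ring

lemma sum_bump_mul_bump_add {k : ℕ} {h : ℤ} (hh₁ : 1 ≤ h) (hhk : h ≤ k) :
    ∑ x ∈ Ico 0 (8 * (k : ℤ) ^ 2), (1 / 2 + bump k (x + h)) * (1 / 2 + bump k x) =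
      (3 / 2 - h) * k := by
  have := Int.le_self_sq k
  rw [← sum_Ico_consecutive_of_le _ zero_le_one (by omega : (1 : ℤ) ≤ 8 * k ^ 2),
    ← sum_Ico_consecutive_of_le _ (by omega : (1 : ℤ) ≤ 8 * k ^ 2 - 1 - h) (by omega),
    ← sum_Ico_consecutive_of_le _ (by omega : 8 * k ^ 2 - 1 - h ≤ 8 * k ^ 2 - h) (by omega),
    ← sum_Ico_consecutive_of_le _ (by omega : 8 * k ^ 2 - h ≤ 8 * k ^ 2 - 1) (by omega),
    sum_Ico_of_forall_eq zero_le_one (c := 1 / 2 * (1 / 2 + k)) fun x hx => by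
      rw [show x = 0 by rw [mem_Ico] at hx; omega, zero_add, bump_zero,
        bump_of_pos_of_lt (by omega) (by omega), add_zero],
    sum_Ico_of_forall_eq (by omega) (c := 1 / 2 * (1 / 2)) fun x hx => by
      rw [mem_Ico] at hx
      rw [bump_of_pos_of_lt (by omega) (by omega), bump_of_pos_of_lt (by omega) (by omega),
        add_zero],
    sum_Ico_of_forall_eq (by omega) (c := (1 / 2 + k) * (1 / 2)) fun x hx => by
      rw [show x = 8 * k ^ 2 - 1 - h by rw [mem_Ico] at hx; omega, sub_add_cancel, bump_last,
        bump_of_pos_of_lt (by omega) (by omega), add_zero],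
    sum_Ico_of_forall_eq (by omega) (c := (1 / 2 - 2 * k) * (1 / 2)) fun x hx => by
      rw [mem_Ico] at hx
      rw [bump_of_le_of_lt (by omega) (by omega), bump_of_pos_of_lt (by omega) (by omega)]
      ring,
    sum_Ico_of_forall_eq (by omega) (c := (1 / 2 - 2 * k) * (1 / 2 + k)) fun x hx => by
      rw [show x = 8 * k ^ 2 - 1 by rw [mem_Ico] at hx; omega, bump_last,
        bump_of_le_of_lt (by omega) (by omega)]
      ring]
  push_cast
  ring

lemma sum_bump_mul_bump_sub (k : ℕ) (h : ℤ) :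
    ∑ x ∈ Ico 0 (8 * (k : ℤ) ^ 2), (1 / 2 + bump k (x - h)) * (1 / 2 + bump k x) =
      ∑ x ∈ Ico 0 (8 * (k : ℤ) ^ 2), (1 / 2 + bump k (x + h)) * (1 / 2 + bump k x) := by
  refine sum_nbij' (8 * k ^ 2 - 1 - ·) (8 * k ^ 2 - 1 - ·) (fun x hx => ?_) (fun x hx => ?_)
    (fun x _ => by simp) (fun x _ => by simp) fun x _ => ?_
  · simp only [mem_Ico] at hx ⊢; omega
  · simp only [mem_Ico] at hx ⊢; omega
  · rw [show 8 * (k : ℤ) ^ 2 - 1 - x + h = 8 * k ^ 2 - 1 - (x - h) by ring, bump_reflect,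
      bump_reflect]

lemma sum_block_comp_seq {k : ℕ} (hk : 1 ≤ k) (g : ℝ → ℝ) :
    ∑ m ∈ block k, g (seq m) = 2 * g (1 / 2 + k) + (8 * k ^ 2 - 2) * g (1 / 2) := by
  rw [sum_block, ← sum_comp_bump hk g]
  refine sum_congr rfl fun x hx => ?_
  rw [mem_Ico] at hx
  rw [seq_pow_four_add (by omega) (by omega)]

lemma sum_block_seq_add_mul_seq {k : ℕ} {h : ℤ} (h₀ : h ≠ 0) (hhk : |h| ≤ k) :
    ∑ m ∈ block k, seq (m + h) * seq m = (3 / 2 - |h|) * k := by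
  have hh := abs_le.mp hhk
  have hseq : ∀ x ∈ Ico 0 (8 * (k : ℤ) ^ 2),
      seq (k ^ 4 + x + h) * seq (k ^ 4 + x) = (1 / 2 + bump k (x + h)) * (1 / 2 + bump k x) := by
    intro x hx
    rw [mem_Ico] at hx
    rw [add_assoc, seq_pow_four_add (by omega) (by omega), seq_pow_four_add (by omega) (by omega)]
  rw [sum_block, sum_congr rfl hseq]
  rcases h₀.lt_or_gt with hneg | hpos
  · simp_rw [← sub_neg_eq_add _ h]
    rw [sum_bump_mul_bump_sub, sum_bump_mul_bump_add (by omega) (by omega), abs_of_neg hneg,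
      Int.cast_neg]
  · rw [abs_of_pos hpos, sum_bump_mul_bump_add (by omega) (by omega)]

lemma card_symmDiff_image_add_Ico_le (a b g : ℤ) :
    #(Ico a b ∆ (Ico a b).image (· + g)) ≤ 2 * g.natAbs := by
  rw [image_add_right_Ico]
  have hsub : Ico a b ∆ Ico (a + g) (b + g) ⊆
      (Ico a (a + g) ∪ Ico b (b + g)) ∪ (Ico (a + g) a ∪ Ico (b + g) b) := by
    intro x hx
    simp only [mem_symmDiff, mem_union, mem_Ico] at hx ⊢
    omega
  have h₁ := card_le_card hsub
  have h₂ := card_union_le (Ico a (a + g) ∪ Ico b (b + g)) (Ico (a + g) a ∪ Ico (b + g) b)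
  have h₃ := card_union_le (Ico a (a + g)) (Ico b (b + g))
  have h₄ := card_union_le (Ico (a + g) a) (Ico (b + g) b)
  simp only [Int.card_Ico] at h₃ h₄
  omega

lemma card_block (k : ℕ) : #(block k) = 8 * k ^ 2 := by
  rw [block, Int.card_Ico, add_sub_cancel_left]
  exact_mod_cast Int.toNat_natCast (8 * k ^ 2)

lemma tendsto_div_card_block {f : ℕ → ℝ} {l c : ℝ}
    (hf : ∀ᶠ k in atTop, f k = l * #(block k) + c * k) :
    Tendsto (fun k => f k / #(block k)) atTop (nhds l) := by
  have hlim : Tendsto (fun k : ℕ => l + c / 8 / k) atTop (nhds l) := by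
    simpa using (tendsto_const_div_atTop_nhds_zero_nat (c / 8)).const_add l
  refine hlim.congr' ?_
  filter_upwards [hf, eventually_ge_atTop 1] with k hfk hk
  have : (k : ℝ) ≠ 0 := by positivity
  rw [hfk, card_block]
  push_cast
  field_simp

lemma tendsto_sum_block_seq_div_card :
    Tendsto (fun k => (∑ m ∈ block k, seq m) / #(block k)) atTop (nhds (1 / 2)) := by
  refine tendsto_div_card_block (c := 2) ?_
  filter_upwards [eventually_ge_atTop 1] with k hk
  rw [sum_block_comp_seq hk fun t => t, card_block]
  push_cast
  ring

lemma tendsto_sum_block_seq_sq_div_card :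
    Tendsto (fun k => (∑ m ∈ block k, seq m ^ 2) / #(block k)) atTop (nhds (1 / 2)) := by
  refine tendsto_div_card_block (c := 2) ?_
  filter_upwards [eventually_ge_atTop 1] with k hk
  rw [sum_block_comp_seq hk (· ^ 2), card_block]
  push_cast
  ring

lemma tendsto_sum_block_seq_add_mul_seq_div_card {h : ℤ} (h₀ : h ≠ 0) :
    Tendsto (fun k => (∑ m ∈ block k, seq (m + h) * seq m) / #(block k)) atTop (nhds 0) := by
  refine tendsto_div_card_block (c := 3 / 2 - |h|) ?_
  filter_upwards [eventually_ge_atTop h.natAbs] with k hk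
  rw [sum_block_seq_add_mul_seq h₀ (by rw [Int.abs_eq_natAbs]; exact_mod_cast hk), zero_mul,
    zero_add, Int.cast_abs]

lemma tendsto_card_symmDiff_image_add_div_card_block (g : ℤ) :
    Tendsto (fun k => (#(block k ∆ (block k).image (· + g)) : ℝ) / #(block k)) atTop
      (nhds 0) := by
  have hlim := tendsto_div_card_block (f := fun k => 2 * g.natAbs * k) (l := 0) (c := 2 * g.natAbs)
    (by simp)
  refine squeeze_zero' (.of_forall fun k => by positivity) ?_ hlim
  filter_upwards [eventually_ge_atTop 1] with k hk
  gcongr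
  calc (#(block k ∆ (block k).image (· + g)) : ℝ) ≤ 2 * g.natAbs := by
        exact_mod_cast card_symmDiff_image_add_Ico_le _ _ g
    _ ≤ 2 * g.natAbs * k := le_mul_of_one_le_right (by positivity) (by exact_mod_cast hk)

end FolnerCounterexample

open FolnerCounterexample in
/-- There is a Følner sequence `(F_n)` in `ℤ` and a sequence `(u_m)` of complex numbers
whose averages of `|u|²` and of `u` along `(F_n)` both tend to `1/2`, while all nonzero
autocorrelation averages tend to `0`. -/
theorem exists_folner_counterexample :
    ∃ (F : ℕ → Finset ℤ) (u : ℤ → ℂ),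
      (∀ n, (F n).Nonempty) ∧
      -- `(F n)` is a Følner sequence in `ℤ`
      (∀ g : ℤ, Tendsto
        (fun n => (((F n) ∆ ((F n).image (fun m => m + g))).card : ℝ) / ((F n).card : ℝ))
        atTop (nhds 0)) ∧
      Tendsto (fun n => (∑ m ∈ F n, ‖u m‖ ^ 2) / ((F n).card : ℝ))
        atTop (nhds (1 / 2)) ∧
      Tendsto (fun n => (∑ m ∈ F n, u m) / ((F n).card : ℂ))
        atTop (nhds ((1 : ℂ) / 2)) ∧
      (∀ h : ℤ, h ≠ 0 →
        Tendsto (fun n => (∑ m ∈ F n, u (m + h) * (starRingEnd ℂ) (u m)) / ((F n).card : ℂ))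
          atTop (nhds 0)) := by
  have shift := tendsto_add_atTop_nat 1
  refine ⟨fun n => block (n + 1), fun m => (seq m : ℂ),
    fun n => Finset.card_pos.1 (by rw [card_block]; positivity),
    fun g => (tendsto_card_symmDiff_image_add_div_card_block g).comp shift, ?_, ?_,
    fun h h₀ => ?_⟩
  · simpa only [Function.comp_def, Complex.norm_real, Real.norm_eq_abs, sq_abs] using
      tendsto_sum_block_seq_sq_div_card.comp shift
  · simpa using (tendsto_sum_block_seq_div_card.comp shift).ofReal
  · simpa using ((tendsto_sum_block_seq_add_mul_seq_div_card h₀).comp shift).ofReal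
end

section
/- Let G be a countable group, V ⊆ G, and suppose that for every unitary representation U of G on a Hilbert space H and every ε > 0, there exists a finitely supported family (c_g) with support in V ∪ V^{-1}, ∑_g c_g = 1, such that P = ∑_g c_g U_g satisfies P = P* and P + ε·Id is a positive operator. Then for every unitary representation π of G and every ξ ∈ H_π with ⟨π(v)ξ, ξ⟩ = 0 for all v ∈ V, the vector ξ is orthogonal to the subspace of π(G)-invariant vectors. -/
/-!
Fix an invariant vector `η`, let `p` be the projection of `ξ` onto `ℂ ∙ η`, and for `ε > 0` let
`P = ∑ c_g π_g` be the operator supplied by the hypothesis. Then `P p = p` because `∑ c_g = 1`,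
and since `P` is self-adjoint the cross terms between `p` and `ξ - p` vanish, so
`⟪P ξ, ξ⟫ = ‖p‖² + ⟪P (ξ - p), ξ - p⟫ ≥ ‖p‖² - ε ‖ξ‖²`. The left side is zero because the
correlations of `ξ` vanish on `V`, hence also on `V⁻¹`. Letting `ε → 0` gives `p = 0`.
-/

open scoped ComplexOrder InnerProductSpace

open RCLike in
theorem norm_sq_le_re_inner_map_add_of_fixed {𝕜 E : Type*} [RCLike 𝕜] [NormedAddCommGroup E]
    [InnerProductSpace 𝕜 E] (P : E →ₗ[𝕜] E) (hP : ∀ x y, ⟪P x, y⟫_𝕜 = ⟪x, P y⟫_𝕜)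
    {ε : ℝ} (hε : 0 ≤ ε) (hpos : ∀ x, 0 ≤ re ⟪P x, x⟫_𝕜 + ε * ‖x‖ ^ 2)
    {p q : E} (hp : P p = p) (hpq : ⟪p, q⟫_𝕜 = 0) :
    ‖p‖ ^ 2 ≤ re ⟪P (p + q), p + q⟫_𝕜 + ε * ‖p + q‖ ^ 2 := by
  have hqp : ⟪P q, p⟫_𝕜 = 0 := by rw [hP, hp, inner_eq_zero_symm, hpq]
  have hsplit : ⟪P (p + q), p + q⟫_𝕜 = ‖p‖ ^ 2 + ⟪P q, q⟫_𝕜 := by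
    simp only [map_add, hp, inner_add_left, inner_add_right, hpq, hqp, inner_self_eq_norm_sq_to_K]
    ring
  have hpyth : ‖p + q‖ ^ 2 = ‖p‖ ^ 2 + ‖q‖ ^ 2 := by
    simpa only [sq] using norm_add_sq_eq_norm_sq_add_norm_sq_of_inner_eq_zero p q hpq
  rw [hsplit, map_add, ← ofReal_pow, ofReal_re, hpyth]
  nlinarith [hpos q, sq_nonneg ‖p‖]

theorem inner_map_inv_apply_self {G 𝕜 E : Type*} [Group G] [RCLike 𝕜] [NormedAddCommGroup E]
    [InnerProductSpace 𝕜 E] (π : G →* (E ≃ₗᵢ[𝕜] E)) (g : G) (x : E) :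
    ⟪π g⁻¹ x, x⟫_𝕜 = starRingEnd 𝕜 ⟪π g x, x⟫_𝕜 := by
  have hx : π g (π g⁻¹ x) = x := by
    rw [← Function.comp_apply (f := π g), ← LinearIsometryEquiv.coe_mul, ← map_mul,
      mul_inv_cancel, map_one, LinearIsometryEquiv.coe_one, id]
  rw [inner_conj_symm, ← (π g).inner_map_map, hx]

theorem le_zero_of_forall_pos_le_mul {a C : ℝ} (h : ∀ ε > 0, a ≤ ε * C) : a ≤ 0 := by
  have : Filter.Tendsto (fun ε : ℝ => ε * C) (nhdsWithin 0 (Set.Ioi 0)) (nhds 0) := by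
    simpa using ((continuous_mul_const C).tendsto 0).mono_left nhdsWithin_le_nhds
  exact ge_of_tendsto this (eventually_nhdsWithin_of_forall h)

section Representation

variable {G 𝕜 E : Type*} [Group G] [RCLike 𝕜] [NormedAddCommGroup E] [InnerProductSpace 𝕜 E]
  (π : G →* (E ≃ₗᵢ[𝕜] E))

theorem finsum_smul_apply_eq_sum {c : G → 𝕜} (hc : (Function.support c).Finite) (x : E) :
    ∑ᶠ g, c g • π g x = ∑ g ∈ hc.toFinset, c g • π g x :=
  finsum_eq_sum_of_support_subset _
    ((Function.support_smul_subset_left _ _).trans hc.coe_toFinset.symm.subset)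

theorem exists_linearMap_apply_eq_finsum {c : G → 𝕜} (hc : (Function.support c).Finite) :
    ∃ P : E →ₗ[𝕜] E, ∀ x, P x = ∑ᶠ g, c g • π g x :=
  ⟨∑ g ∈ hc.toFinset, c g • ((π g : E ≃ₗᵢ[𝕜] E) : E →ₗ[𝕜] E), fun x => by
    simp [finsum_smul_apply_eq_sum π hc]⟩

theorem finsum_smul_apply_of_forall_apply_eq {c : G → 𝕜} (hc : ∑ᶠ g, c g = 1) {η : E}
    (hη : ∀ g, π g η = η) : ∑ᶠ g, c g • π g η = η := by
  simp only [hη, ← finsum_smul, hc, one_smul]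

theorem inner_finsum_smul_apply_self_eq_zero {V : Set G} {c : G → 𝕜}
    (hc : (Function.support c).Finite) (hsupp : Function.support c ⊆ V ∪ V⁻¹) {ξ : E}
    (hV : ∀ v ∈ V, ⟪π v ξ, ξ⟫_𝕜 = 0) : ⟪∑ᶠ g, c g • π g ξ, ξ⟫_𝕜 = 0 := by
  rw [finsum_smul_apply_eq_sum π hc, sum_inner]
  refine Finset.sum_eq_zero fun g hg => ?_
  rcases hsupp (hc.mem_toFinset.mp hg) with hgV | hgV
  · rw [inner_smul_left, hV g hgV, mul_zero]
  · rw [inner_smul_left, ← inv_inv g, inner_map_inv_apply_self, hV _ hgV, map_zero, mul_zero]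

end Representation

theorem positive_operator_witness_implies_opRecurrence_general (G : Type) [Group G]
    (V : Set G)
    (hyp : ∀ (H : Type) (_ : NormedAddCommGroup H) (_ : InnerProductSpace ℂ H)
      (_ : CompleteSpace H),
      ∀ (U : G →* (H ≃ₗᵢ[ℂ] H)) (ε : ℝ), 0 < ε → ∃ c : G → ℂ,
        (Function.support c).Finite ∧
        Function.support c ⊆ V ∪ V⁻¹ ∧
        ∑ᶠ g : G, c g = 1 ∧
        -- `P = ∑ c_g U_g` is self-adjoint: `⟨P x, y⟩ = ⟨x, P y⟩`
        (∀ x y : H, (inner ℂ (∑ᶠ g : G, c g • (U g) x) y : ℂ) =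
          inner ℂ x (∑ᶠ g : G, c g • (U g) y)) ∧
        -- `P + ε` is a positive operator
        (∀ x : H, 0 ≤ (inner ℂ (∑ᶠ g : G, c g • (U g) x) x : ℂ) + (ε : ℂ) * (inner ℂ x x : ℂ))) :
    ∀ (H : Type) (_ : NormedAddCommGroup H) (_ : InnerProductSpace ℂ H) (_ : CompleteSpace H),
      ∀ (π : G →* (H ≃ₗᵢ[ℂ] H)) (ξ : H),
        (∀ v ∈ V, (inner ℂ ((π v) ξ) ξ : ℂ) = 0) →
        ∀ η : H, (∀ g : G, (π g) η = η) → (inner ℂ ξ η : ℂ) = 0 := by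
  intro H _ _ hH π ξ hV η hη
  set p := (ℂ ∙ η).starProjection ξ
  have hp : ∀ ε > 0, ‖p‖ ^ 2 ≤ ε * ‖ξ‖ ^ 2 := by
    intro ε hε
    obtain ⟨c, hfin, hsupp, hsum, hsa, hpos⟩ := hyp H _ _ hH π ε hε
    obtain ⟨P, hP⟩ := exists_linearMap_apply_eq_finsum π hfin
    simp only [← hP] at hsa hpos
    have hPp : P p = p := by
      obtain ⟨a, ha⟩ : ∃ a : ℂ, a • η = p :=
        Submodule.mem_span_singleton.mp ((ℂ ∙ η).starProjection_apply_mem ξ)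
      rw [← ha, map_smul, hP, finsum_smul_apply_of_forall_apply_eq π hsum hη]
    have hposRe : ∀ x, 0 ≤ RCLike.re ⟪P x, x⟫_ℂ + ε * ‖x‖ ^ 2 := fun x => by
      simpa [inner_self_eq_norm_sq_to_K, ← Complex.ofReal_pow] using
        (Complex.nonneg_iff.mp (hpos x)).1
    have hpq : ⟪p, ξ - p⟫_ℂ = 0 :=
      inner_eq_zero_symm.mp (Submodule.starProjection_inner_eq_zero ξ p
        ((ℂ ∙ η).starProjection_apply_mem ξ))
    calc ‖p‖ ^ 2 ≤ RCLike.re ⟪P (p + (ξ - p)), p + (ξ - p)⟫_ℂ + ε * ‖p + (ξ - p)‖ ^ 2 :=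
          norm_sq_le_re_inner_map_add_of_fixed P hsa hε.le hposRe hPp hpq
      _ = ε * ‖ξ‖ ^ 2 := by
          rw [add_sub_cancel, hP, inner_finsum_smul_apply_self_eq_zero π hfin hsupp hV,
            map_zero, zero_add]
  have hp0 : p = 0 := by
    simpa using le_zero_of_forall_pos_le_mul hp
  have hξ : ξ ∈ (ℂ ∙ η)ᗮ := by
    rw [← Submodule.ker_starProjection]
    exact hp0
  exact Submodule.mem_orthogonal_singleton_iff_inner_left.mp hξ

/-- If for every unitary representation `U` and every `ε > 0` there is a finitely supported
family `(c_g)` supported in `V ∪ V⁻¹` with `∑ c_g = 1` such that `P = ∑ c_g U_g` is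
self-adjoint with `P + ε·Id` positive, then every vector `ξ` with vanishing correlations
`⟨π(v)ξ, ξ⟩ = 0` on `V` is orthogonal to the `π(G)`-invariant vectors. -/
theorem positive_operator_witness_implies_opRecurrence (G : Type) [Group G] [Countable G]
    (V : Set G)
    (hyp : ∀ (H : Type) (_ : NormedAddCommGroup H) (_ : InnerProductSpace ℂ H)
      (_ : CompleteSpace H),
      ∀ (U : G →* (H ≃ₗᵢ[ℂ] H)) (ε : ℝ), 0 < ε → ∃ c : G → ℂ,
        (Function.support c).Finite ∧
        Function.support c ⊆ V ∪ V⁻¹ ∧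
        ∑ᶠ g : G, c g = 1 ∧
        -- `P = ∑ c_g U_g` is self-adjoint: `⟨P x, y⟩ = ⟨x, P y⟩`
        (∀ x y : H, (inner ℂ (∑ᶠ g : G, c g • (U g) x) y : ℂ) =
          inner ℂ x (∑ᶠ g : G, c g • (U g) y)) ∧
        -- `P + ε` is a positive operator
        (∀ x : H, 0 ≤ (inner ℂ (∑ᶠ g : G, c g • (U g) x) x : ℂ) + (ε : ℂ) * (inner ℂ x x : ℂ))) :
    ∀ (H : Type) (_ : NormedAddCommGroup H) (_ : InnerProductSpace ℂ H) (_ : CompleteSpace H),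
      ∀ (π : G →* (H ≃ₗᵢ[ℂ] H)) (ξ : H),
        (∀ v ∈ V, (inner ℂ ((π v) ξ) ξ : ℂ) = 0) →
        ∀ η : H, (∀ g : G, (π g) η = η) → (inner ℂ ξ η : ℂ) = 0 :=
  positive_operator_witness_implies_opRecurrence_general G V hyp
end
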